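/- Let R be a commutative Artinian local ring with maximal ideal 𝔪 and residue field k = R/𝔪, let M be a finite free R-module, and let f be an R-linear endomorphism of M. Suppose v̄ ∈ M/𝔪M is an eigenvector of the induced endomorphism f̄ with eigenvalue ᾱ ∈ k, where ᾱ is a simple root of the characteristic polynomial of f̄. Then there exist α ∈ R lifting ᾱ and v ∈ M lifting v̄ such that f(v) = α·v. -/
import Mathlib

open IsLocalRing Polynomial

lemma artinian_local_isAdicComplete (R : Type*) [CommRing R] [IsArtinianRing R]
    [IsLocalRing R] : IsAdicComplete (maximalIdeal R) R := by
  obtain ⟨n, hn⟩ : IsNilpotent (maximalIdeal R) := by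
    rw [← IsLocalRing.jacobson_eq_maximalIdeal (⊥ : Ideal R) bot_ne_top]
    exact IsArtinianRing.isNilpotent_jacobson_bot
  have hbot : ∀ m : ℕ, n ≤ m → (maximalIdeal R ^ m • ⊤ : Submodule R R) = ⊥ := by
    intro m hm
    have : maximalIdeal R ^ m = 0 := pow_eq_zero_of_le hm hn
    rw [this]
    simp
  refine { haus' := ?_, prec' := ?_ }
  · intro x hx
    have := hx n
    rw [SModEq.sub_mem, hbot n le_rfl] at this
    simpa using this
  · intro g hg
    refine ⟨g n, fun m => ?_⟩
    rcases le_total m n with h | h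
    · exact hg h
    · have := hg h
      rw [SModEq.sub_mem, hbot n le_rfl] at this
      have : g n = g m := by simpa [sub_eq_zero] using this
      rw [← this]

lemma smul_top_mem_map {R : Type*} [CommRing R] {M : Type*} [AddCommGroup M] [Module R M]
    (I : Ideal R) (g : M →ₗ[R] M) {x : M} (hx : x ∈ I • (⊤ : Submodule R M)) :
    g x ∈ I • (⊤ : Submodule R M) := by
  refine Submodule.smul_induction_on hx (fun r hr m _ => ?_) (fun a b ha hb => ?_)
  · rw [map_smul]
    exact Submodule.smul_mem_smul hr trivial
  · rw [map_add]; exact Submodule.add_mem _ ha hb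

/-- Hensel-lemma lifting of eigenvectors: let `R` be a commutative Artinian local ring
with maximal ideal `𝔪` and residue field `k`, `M` a finite free `R`-module and
`f : M → M` an `R`-linear endomorphism. Suppose `v₀` reduces to an eigenvector of the
induced endomorphism `f̄` of `M/𝔪M` with eigenvalue `ᾱ` (the reduction of `α₀`), and
that `ᾱ` is a simple root of the characteristic polynomial of `f̄` (the reduction of
the characteristic polynomial of `f`). Then there exist `α ∈ R` lifting `ᾱ` and
`v ∈ M` lifting `v̄` with `f(v) = α·v`. -/
theorem eigenvector_lift {R : Type*} [CommRing R] [IsArtinianRing R] [IsLocalRing R]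
    {M : Type*} [AddCommGroup M] [Module R M] [Module.Free R M] [Module.Finite R M]
    (f : M →ₗ[R] M) (α₀ : R) (v₀ : M)
    (hv₀ : v₀ ∉ (maximalIdeal R • (⊤ : Submodule R M)))
    (heig : f v₀ - α₀ • v₀ ∈ (maximalIdeal R • (⊤ : Submodule R M)))
    (hbar : Polynomial (ResidueField R))
    (hfact : (LinearMap.charpoly f).map (residue R)
        = (Polynomial.X - Polynomial.C (residue R α₀)) * hbar)
    (hsimple : hbar.eval (residue R α₀) ≠ 0) :
    ∃ (α : R) (v : M), α - α₀ ∈ maximalIdeal R ∧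
      v - v₀ ∈ (maximalIdeal R • (⊤ : Submodule R M)) ∧ f v = α • v := by
  haveI : IsAdicComplete (maximalIdeal R) R := artinian_local_isAdicComplete R
  set p := LinearMap.charpoly f with hp
  have hmonic : p.Monic := LinearMap.charpoly_monic f
  have hres : ∀ (q : R[X]) (a : R), residue R (q.eval a) = (q.map (residue R)).eval (residue R a) := by
    intro q a
    rw [Polynomial.eval_map, Polynomial.eval₂_at_apply]
  -- eval α₀ lies in the maximal ideal
  have h1 : p.eval α₀ ∈ maximalIdeal R := by
    have : residue R (p.eval α₀) = 0 := by
      rw [hres, hfact]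
      simp
    exact (Ideal.Quotient.eq_zero_iff_mem).mp this
  -- derivative at α₀ is a unit
  have h2 : IsUnit (Ideal.Quotient.mk (maximalIdeal R) (p.derivative.eval α₀)) := by
    have key : residue R (p.derivative.eval α₀) = hbar.eval (residue R α₀) := by
      rw [hres, ← Polynomial.derivative_map, hfact]
      simp [Polynomial.derivative_mul]
    have hne : p.derivative.eval α₀ ∉ maximalIdeal R := by
      intro h
      apply hsimple
      rw [← key]
      exact Ideal.Quotient.eq_zero_iff_mem.mpr h
    exact (IsLocalRing.notMem_maximalIdeal.mp hne).map _
  obtain ⟨α, hroot, hα⟩ := HenselianRing.is_henselian p hmonic α₀ h1 h2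
  have hresα : residue R α = residue R α₀ := Ideal.Quotient.eq.mpr hα
  -- factor p = (X - C α) * q
  set q := p /ₘ (X - C α) with hq
  have hpq : (X - C α) * q = p := (Polynomial.mul_divByMonic_eq_iff_isRoot).mpr hroot
  -- reduction of q is hbar
  have hqbar : q.map (residue R) = hbar := by
    have h3 : (X - C (residue R α₀)) * (q.map (residue R))
        = (X - C (residue R α₀)) * hbar := by
      rw [← hfact, ← hpq, Polynomial.map_mul]
      simp [hresα]
    exact mul_left_cancel₀ (Polynomial.X_sub_C_ne_zero (residue R α₀)) h3
  -- q.eval α is a unit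
  have hc : IsUnit (q.eval α) := by
    by_contra h
    have hmem : q.eval α ∈ maximalIdeal R := h
    have : residue R (q.eval α) = 0 := (Ideal.Quotient.eq_zero_iff_mem).mpr hmem
    rw [hres, hqbar, hresα] at this
    exact hsimple this
  obtain ⟨u, hu⟩ := hc
  set c := q.eval α with hcdef
  -- Cayley-Hamilton: (f - α) ∘ (aeval f q) = 0
  have hCH : ∀ w : M, f ((Polynomial.aeval f q) w) = α • (Polynomial.aeval f q) w := by
    intro w
    have h0 : (Polynomial.aeval f) ((X - C α) * q) = 0 := by
      rw [hpq]; exact LinearMap.aeval_self_charpoly f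
    have := congrArg (fun g : Module.End R M => g w) h0
    simp only [map_mul, Module.End.mul_apply, LinearMap.zero_apply] at this
    rw [map_sub, Polynomial.aeval_X, Polynomial.aeval_C] at this
    simp only [LinearMap.sub_apply, Module.algebraMap_end_apply] at this
    rw [sub_eq_zero] at this
    exact this
  -- f v₀ - α • v₀ ∈ 𝔪M
  have heig' : f v₀ - α • v₀ ∈ (maximalIdeal R • (⊤ : Submodule R M)) := by
    have : f v₀ - α • v₀ = (f v₀ - α₀ • v₀) + (α₀ - α) • v₀ := by
      rw [sub_smul]; abel
    rw [this]
    refine Submodule.add_mem _ heig (Submodule.smul_mem_smul ?_ trivial)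
    have := (maximalIdeal R).neg_mem hα
    simpa using this
  -- aeval f q v₀ - c • v₀ ∈ 𝔪M
  have hkey : (Polynomial.aeval f q) v₀ - c • v₀ ∈ (maximalIdeal R • (⊤ : Submodule R M)) := by
    obtain ⟨s, hs⟩ := Polynomial.X_sub_C_dvd_sub_C_eval (a := α) (p := q)
    have hq' : q = s * (X - C α) + C c := by
      rw [mul_comm]; rw [← hcdef] at hs; linear_combination hs
    have : (Polynomial.aeval f q) v₀
        = (Polynomial.aeval f s) (f v₀ - α • v₀) + c • v₀ := by
      rw [hq']
      simp only [map_add, map_mul, Polynomial.aeval_C, LinearMap.add_apply,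
        Module.End.mul_apply, Module.algebraMap_end_apply]
      congr 1
      rw [map_sub, Polynomial.aeval_X, Polynomial.aeval_C]
      simp only [LinearMap.sub_apply, Module.algebraMap_end_apply]
    rw [this, add_sub_cancel_right]
    exact smul_top_mem_map _ _ heig'
  -- the eigenvector
  refine ⟨α, (↑u⁻¹ : R) • (Polynomial.aeval f q) v₀, hα, ?_, ?_⟩
  · have : (↑u⁻¹ : R) • (Polynomial.aeval f q) v₀ - v₀
        = (↑u⁻¹ : R) • ((Polynomial.aeval f q) v₀ - c • v₀) := by
      rw [smul_sub, smul_smul, ← hu, Units.inv_mul, one_smul]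
    rw [this]
    exact Submodule.smul_mem _ _ hkey
  · rw [map_smul, hCH, smul_comm]
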